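/- Assume λ ≤ δ√(V₁V₂) for some δ ∈ (0,1) and (3+α)/3 ≤ p ≤ q ≤ 3+α. Then for any (u,v) in the Nehari–Pohozaev manifold 𝓜, I(u,v) = max_{t>0} I(u^t, v^t). -/

import Mathlib

noncomputable section
open MeasureTheory Filter Topology
open scoped InnerProductSpace

abbrev E3 : Type := EuclideanSpace ℝ (Fin 3)

def riesz3 (α : ℝ) (x : E3) : ℝ :=
  Real.Gamma ((3 - α) / 2) /
    (Real.Gamma (α / 2) * Real.pi ^ ((3 : ℝ) / 2) * (2 : ℝ) ^ α * ‖x‖ ^ (3 - α))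

def choq (α p : ℝ) (u : E3 → ℝ) : ℝ :=
  ∫ x : E3, (∫ y : E3, riesz3 α (x - y) * |u y| ^ p) * |u x| ^ p

def l2sq (u : E3 → ℝ) : ℝ := ∫ x : E3, u x ^ 2

def gradSq (g : E3 → E3) : ℝ := ∫ x : E3, ‖g x‖ ^ 2

def pairInt (u v : E3 → ℝ) : ℝ := ∫ x : E3, u x * v x

def IsWeakGradient (u : E3 → ℝ) (g : E3 → E3) : Prop :=
  ∀ φ : E3 → ℝ, ContDiff ℝ (⊤ : ℕ∞) φ → HasCompactSupport φ →
    ∫ x : E3, u x • gradient φ x = - ∫ x : E3, φ x • g x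

def MemH1 (u : E3 → ℝ) (g : E3 → E3) : Prop :=
  MemLp u 2 volume ∧ MemLp g 2 volume ∧ IsWeakGradient u g

def Nontriv (u v : E3 → ℝ) : Prop :=
  ¬ (u =ᵐ[volume] (fun _ => (0 : ℝ)) ∧ v =ᵐ[volume] (fun _ => (0 : ℝ)))

def energy (a₁ a₂ b₁ b₂ V₁ V₂ lam μ ν α p q : ℝ)
    (u : E3 → ℝ) (gu : E3 → E3) (v : E3 → ℝ) (gv : E3 → E3) : ℝ :=
  (1/2) * (a₁ * gradSq gu + a₂ * gradSq gv)
    + (1/2) * (V₁ * l2sq u + V₂ * l2sq v)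
    + (1/4) * (b₁ * gradSq gu ^ 2 + b₂ * gradSq gv ^ 2)
    - μ / (2*p) * choq α p u - ν / (2*q) * choq α q v
    - lam * pairInt u v

def Jfun (a₁ a₂ b₁ b₂ V₁ V₂ lam μ ν α p q : ℝ)
    (u : E3 → ℝ) (gu : E3 → E3) (v : E3 → ℝ) (gv : E3 → E3) : ℝ :=
  2 * (a₁ * gradSq gu + a₂ * gradSq gv)
    + 4 * (V₁ * l2sq u + V₂ * l2sq v)
    + 2 * (b₁ * gradSq gu ^ 2 + b₂ * gradSq gv ^ 2)
    - (p + α + 3) / p * μ * choq α p u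
    - (q + α + 3) / q * ν * choq α q v
    - 8 * lam * pairInt u v

def IsWeakSolution (a₁ a₂ b₁ b₂ V₁ V₂ lam μ ν α p q : ℝ)
    (u : E3 → ℝ) (gu : E3 → E3) (v : E3 → ℝ) (gv : E3 → E3) : Prop :=
  ∀ φ ψ : E3 → ℝ, ContDiff ℝ (⊤ : ℕ∞) φ → HasCompactSupport φ →
    ContDiff ℝ (⊤ : ℕ∞) ψ → HasCompactSupport ψ →
    a₁ * (∫ x : E3, ⟪gu x, gradient φ x⟫_ℝ)
      + a₂ * (∫ x : E3, ⟪gv x, gradient ψ x⟫_ℝ)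
      + V₁ * (∫ x : E3, u x * φ x) + V₂ * (∫ x : E3, v x * ψ x)
      + b₁ * gradSq gu * (∫ x : E3, ⟪gu x, gradient φ x⟫_ℝ)
      + b₂ * gradSq gv * (∫ x : E3, ⟪gv x, gradient ψ x⟫_ℝ)
      - μ * (∫ x : E3, (∫ y : E3, riesz3 α (x - y) * |u y| ^ p)
              * (|u x| ^ (p - 2) * u x) * φ x)
      - ν * (∫ x : E3, (∫ y : E3, riesz3 α (x - y) * |v y| ^ q)
              * (|v x| ^ (q - 2) * v x) * ψ x)
      - lam * (∫ x : E3, u x * ψ x) - lam * (∫ x : E3, v x * φ x) = 0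

def scaleFun (t : ℝ) (w : E3 → ℝ) : E3 → ℝ := fun x => t * w ((t ^ 2)⁻¹ • x)

def scaleGrad (t : ℝ) (g : E3 → E3) : E3 → E3 := fun x => t⁻¹ • g ((t ^ 2)⁻¹ • x)

lemma int_scale6 {t : ℝ} (ht : 0 < t) (f : E3 → ℝ) :
    (∫ x : E3, f ((t ^ 2)⁻¹ • x)) = t ^ (6:ℕ) * ∫ x : E3, f x := by
  have h := MeasureTheory.Measure.integral_comp_inv_smul (volume : Measure E3) f (t ^ 2)
  simp only [finrank_euclideanSpace_fin, smul_eq_mul] at h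
  rw [h, abs_of_nonneg (by positivity : (0:ℝ) ≤ (t ^ 2) ^ 3)]
  ring

lemma riesz3_smul {α : ℝ} (c : ℝ) (hc : 0 < c) (z : E3) :
    riesz3 α (c • z) = c ^ (α - 3) * riesz3 α z := by
  unfold riesz3
  rw [norm_smul, Real.norm_eq_abs, abs_of_pos hc, Real.mul_rpow hc.le (norm_nonneg z),
    show α - 3 = -(3 - α) by ring, Real.rpow_neg hc.le]
  simp only [div_eq_mul_inv, mul_inv]
  ring

lemma riesz3_nonneg {α : ℝ} (hα : 0 < α) (hα3 : α < 3) (x : E3) : 0 ≤ riesz3 α x := by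
  unfold riesz3
  have h1 : 0 < Real.Gamma ((3 - α)/2) := Real.Gamma_pos_of_pos (by linarith)
  have h2 : 0 < Real.Gamma (α/2) := Real.Gamma_pos_of_pos (by linarith)
  have h3 : (0:ℝ) < Real.pi ^ ((3:ℝ)/2) := Real.rpow_pos_of_pos Real.pi_pos _
  have h4 : (0:ℝ) < (2:ℝ) ^ α := Real.rpow_pos_of_pos two_pos _
  have h5 : (0:ℝ) ≤ ‖x‖ ^ (3 - α) := Real.rpow_nonneg (norm_nonneg x) _
  exact div_nonneg h1.le (by positivity)

lemma choq_nonneg {α p : ℝ} (hα : 0 < α) (hα3 : α < 3) (u : E3 → ℝ) : 0 ≤ choq α p u := by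
  unfold choq
  apply MeasureTheory.integral_nonneg
  intro x
  apply mul_nonneg _ (Real.rpow_nonneg (abs_nonneg _) _)
  apply MeasureTheory.integral_nonneg
  intro y
  exact mul_nonneg (riesz3_nonneg hα hα3 _) (Real.rpow_nonneg (abs_nonneg _) _)

lemma gradSq_nonneg (g : E3 → E3) : 0 ≤ gradSq g :=
  MeasureTheory.integral_nonneg fun x => by positivity

lemma l2sq_scale {t : ℝ} (ht : 0 < t) (u : E3 → ℝ) :
    l2sq (scaleFun t u) = t ^ (8:ℕ) * l2sq u := by
  simp only [l2sq, scaleFun]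
  simp_rw [mul_pow]
  rw [MeasureTheory.integral_const_mul]
  have h : (∫ x : E3, u ((t ^ 2)⁻¹ • x) ^ 2) = t ^ (6:ℕ) * ∫ x : E3, u x ^ 2 :=
    int_scale6 ht (fun x => u x ^ 2)
  rw [h]; ring

lemma gradSq_scale {t : ℝ} (ht : 0 < t) (g : E3 → E3) :
    gradSq (scaleGrad t g) = t ^ (4:ℕ) * gradSq g := by
  simp only [gradSq, scaleGrad]
  simp_rw [norm_smul, Real.norm_eq_abs, abs_of_pos (inv_pos.2 ht), mul_pow]
  rw [MeasureTheory.integral_const_mul]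
  have h : (∫ x : E3, ‖g ((t ^ 2)⁻¹ • x)‖ ^ 2) = t ^ (6:ℕ) * ∫ x : E3, ‖g x‖ ^ 2 :=
    int_scale6 ht (fun x => ‖g x‖ ^ 2)
  rw [h]
  field_simp

lemma pairInt_scale {t : ℝ} (ht : 0 < t) (u v : E3 → ℝ) :
    pairInt (scaleFun t u) (scaleFun t v) = t ^ (8:ℕ) * pairInt u v := by
  simp only [pairInt, scaleFun]
  have e : ∀ x : E3, t * u ((t^2)⁻¹ • x) * (t * v ((t^2)⁻¹ • x))
      = t^(2:ℕ) * (u ((t^2)⁻¹ • x) * v ((t^2)⁻¹ • x)) := fun x => by ring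
  simp_rw [e]
  rw [MeasureTheory.integral_const_mul]
  have h : (∫ x : E3, u ((t ^ 2)⁻¹ • x) * v ((t ^ 2)⁻¹ • x)) = t ^ (6:ℕ) * ∫ x : E3, u x * v x :=
    int_scale6 ht (fun x => u x * v x)
  rw [h]; ring

lemma choq_scale {α p : ℝ} {t : ℝ} (ht : 0 < t) (u : E3 → ℝ) :
    choq α p (scaleFun t u) = t ^ (2*p + 2*α + 6) * choq α p u := by
  have ht2 : (0:ℝ) < t ^ 2 := by positivity
  simp only [choq, scaleFun]
  have habs : ∀ w : ℝ, |t * w| ^ p = t ^ p * |w| ^ p := fun w => by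
    rw [abs_mul, abs_of_pos ht, Real.mul_rpow ht.le (abs_nonneg w)]
  simp_rw [habs]
  have inner_eq : ∀ x : E3,
      (∫ y : E3, riesz3 α (x - y) * (t ^ p * |u ((t ^ 2)⁻¹ • y)| ^ p))
        = t ^ (6:ℕ) * ∫ z : E3, riesz3 α (x - (t ^ 2) • z) * (t ^ p * |u z| ^ p) := by
    intro x
    have h1 : (∫ y : E3, riesz3 α (x - (t ^ 2) • ((t ^ 2)⁻¹ • y)) * (t ^ p * |u ((t ^ 2)⁻¹ • y)| ^ p))
        = t ^ (6:ℕ) * ∫ z : E3, riesz3 α (x - (t ^ 2) • z) * (t ^ p * |u z| ^ p) :=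
      int_scale6 ht (fun z => riesz3 α (x - (t ^ 2) • z) * (t ^ p * |u z| ^ p))
    simp_rw [smul_inv_smul₀ ht2.ne'] at h1
    exact h1
  simp_rw [inner_eq]
  have hr : ∀ x z : E3, riesz3 α (x - (t ^ 2) • z)
      = (t ^ 2) ^ (α - 3) * riesz3 α ((t ^ 2)⁻¹ • x - z) := by
    intro x z
    have h := riesz3_smul (α := α) (t ^ 2) ht2 ((t ^ 2)⁻¹ • x - z)
    rw [smul_sub, smul_inv_smul₀ ht2.ne'] at h
    exact h
  simp_rw [hr]
  have pull : ∀ x : E3,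
      (∫ z : E3, (t ^ 2) ^ (α - 3) * riesz3 α ((t ^ 2)⁻¹ • x - z) * (t ^ p * |u z| ^ p))
        = ((t ^ 2) ^ (α - 3) * t ^ p) * ∫ z : E3, riesz3 α ((t ^ 2)⁻¹ • x - z) * |u z| ^ p := by
    intro x
    rw [← MeasureTheory.integral_const_mul]
    congr 1; funext z; ring
  simp_rw [pull]
  have e : ∀ (A B : ℝ), t ^ (6:ℕ) * (((t ^ 2) ^ (α - 3) * t ^ p) * A) * (t ^ p * B)
      = (t ^ (6:ℕ) * (t ^ 2) ^ (α - 3) * t ^ p * t ^ p) * (A * B) := fun A B => by ring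
  simp_rw [e, MeasureTheory.integral_const_mul]
  have h2 : (∫ x : E3, (∫ z : E3, riesz3 α ((t ^ 2)⁻¹ • x - z) * |u z| ^ p) * |u ((t ^ 2)⁻¹ • x)| ^ p)
      = t ^ (6:ℕ) * ∫ w : E3, (∫ z : E3, riesz3 α (w - z) * |u z| ^ p) * |u w| ^ p :=
    int_scale6 ht (fun w => (∫ z : E3, riesz3 α (w - z) * |u z| ^ p) * |u w| ^ p)
  rw [h2]
  have hsc : t ^ (6:ℕ) * (t ^ 2) ^ (α - 3) * t ^ p * t ^ p * t ^ (6:ℕ)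
      = t ^ (2*p + 2*α + 6) := by
    rw [← Real.rpow_natCast t 6, ← Real.rpow_natCast t 2, ← Real.rpow_mul ht.le,
        ← Real.rpow_add ht, ← Real.rpow_add ht, ← Real.rpow_add ht, ← Real.rpow_add ht]
    congr 1
    push_cast
    ring
  rw [← hsc]
  ring

lemma key_ineq {t S D cp cq gp gq : ℝ} (ht : 0 < t) (hS : 0 ≤ S) (hcp : 0 ≤ cp)
    (hcq : 0 ≤ cq) (hgp : 8 ≤ gp) (hgq : 8 ≤ gq)
    (hJ : 2*S + 8*D - gp*cp - gq*cq = 0) :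
    (1/2)*S*t^(4:ℕ) + D*t^(8:ℕ) - cp*t^gp - cq*t^gq ≤ (1/2)*S + D - cp - cq := by
  have hb : ∀ g : ℝ, 8 ≤ g → 1 + g/8*(t^(8:ℕ) - 1) ≤ t^g := by
    intro g hg
    have h1 : (1:ℝ) ≤ g/8 := by linarith
    have h2 : (-1:ℝ) ≤ t^(8:ℕ) - 1 := by nlinarith [pow_pos ht 8]
    have h3 := one_add_mul_self_le_rpow_one_add h2 h1
    have h4 : (1:ℝ) + (t^(8:ℕ) - 1) = t^(8:ℕ) := by ring
    rw [h4] at h3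
    have h5 : (t^(8:ℕ):ℝ) ^ (g/8) = t ^ g := by
      rw [← Real.rpow_natCast t 8, ← Real.rpow_mul ht.le]
      congr 1
      push_cast
      ring
    rwa [h5] at h3
  have hBp := hb gp hgp
  have hBq := hb gq hgq
  have hD : D = (gp*cp + gq*cq - 2*S)/8 := by linarith
  rw [hD]
  nlinarith [mul_nonneg hcp (sub_nonneg.2 hBp), mul_nonneg hcq (sub_nonneg.2 hBq),
             mul_nonneg hS (sq_nonneg (t^(4:ℕ) - 1))]

lemma scaleFun_one (w : E3 → ℝ) : scaleFun 1 w = w := by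
  funext x; simp [scaleFun]

lemma scaleGrad_one (g : E3 → E3) : scaleGrad 1 g = g := by
  funext x; simp [scaleGrad]

/-- **On the Nehari–Pohozaev manifold the energy is the fibering maximum:**
for `(u,v) ∈ 𝓜`, `I(u,v) = max_{t>0} I(u^t, v^t)`. -/
theorem energy_is_fibering_max
    (a₁ a₂ b₁ b₂ V₁ V₂ lam μ ν α p q δ : ℝ)
    (ha₁ : 0 < a₁) (ha₂ : 0 < a₂) (hb₁ : 0 < b₁) (hb₂ : 0 < b₂)
    (hV₁ : 0 < V₁) (hV₂ : 0 < V₂) (hlam : 0 < lam)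
    (hμ : 0 < μ) (hν : 0 < ν)
    (hα : 0 < α ∧ α < 3)
    (hδ : 0 < δ ∧ δ < 1) (hlamδ : lam ≤ δ * Real.sqrt (V₁ * V₂))
    (hp : (3 + α) / 3 ≤ p) (hpq : p ≤ q) (hq : q ≤ 3 + α)
    (u : E3 → ℝ) (gu : E3 → E3) (v : E3 → ℝ) (gv : E3 → E3)
    (hu : MemH1 u gu) (hv : MemH1 v gv) (hnt : Nontriv u v)
    (hJ : Jfun a₁ a₂ b₁ b₂ V₁ V₂ lam μ ν α p q u gu v gv = 0) :
    IsGreatest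
      {r : ℝ | ∃ t : ℝ, 0 < t ∧
        r = energy a₁ a₂ b₁ b₂ V₁ V₂ lam μ ν α p q
              (scaleFun t u) (scaleGrad t gu) (scaleFun t v) (scaleGrad t gv)}
      (energy a₁ a₂ b₁ b₂ V₁ V₂ lam μ ν α p q u gu v gv) := by
  constructor
  · exact ⟨1, one_pos, by
      rw [scaleFun_one, scaleFun_one, scaleGrad_one, scaleGrad_one]⟩
  · rintro r ⟨t, ht, rfl⟩
    have hp0 : (0:ℝ) < p := lt_of_lt_of_le (by linarith [hα.1]) hp
    have hq0 : (0:ℝ) < q := lt_of_lt_of_le hp0 hpq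
    have hgp : (8:ℝ) ≤ 2*p + 2*α + 6 := by linarith [hα.1]
    have hgq : (8:ℝ) ≤ 2*q + 2*α + 6 := by linarith [hα.1]
    have hS : 0 ≤ a₁ * gradSq gu + a₂ * gradSq gv :=
      add_nonneg (mul_nonneg ha₁.le (gradSq_nonneg gu)) (mul_nonneg ha₂.le (gradSq_nonneg gv))
    have hcp : 0 ≤ μ / (2*p) * choq α p u :=
      mul_nonneg (by positivity) (choq_nonneg hα.1 hα.2 u)
    have hcq : 0 ≤ ν / (2*q) * choq α q v :=
      mul_nonneg (by positivity) (choq_nonneg hα.1 hα.2 v)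
    have hdp : (p+α+3)/p * μ * choq α p u = (2*p+2*α+6) * (μ/(2*p) * choq α p u) := by
      field_simp
      ring
    have hdq : (q+α+3)/q * ν * choq α q v = (2*q+2*α+6) * (ν/(2*q) * choq α q v) := by
      field_simp
      ring
    have hJ' : 2*(a₁ * gradSq gu + a₂ * gradSq gv)
        + 8*((1/2) * (V₁ * l2sq u + V₂ * l2sq v)
            + (1/4) * (b₁ * gradSq gu ^ 2 + b₂ * gradSq gv ^ 2) - lam * pairInt u v)
        - (2*p+2*α+6)*(μ/(2*p) * choq α p u)
        - (2*q+2*α+6)*(ν/(2*q) * choq α q v) = 0 := by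
      simp only [Jfun] at hJ
      linarith [hJ, hdp, hdq]
    have hL : energy a₁ a₂ b₁ b₂ V₁ V₂ lam μ ν α p q
          (scaleFun t u) (scaleGrad t gu) (scaleFun t v) (scaleGrad t gv)
        = (1/2)*(a₁ * gradSq gu + a₂ * gradSq gv)*t^(4:ℕ)
          + ((1/2) * (V₁ * l2sq u + V₂ * l2sq v)
            + (1/4) * (b₁ * gradSq gu ^ 2 + b₂ * gradSq gv ^ 2) - lam * pairInt u v)*t^(8:ℕ)
          - (μ/(2*p) * choq α p u)*t^(2*p+2*α+6)
          - (ν/(2*q) * choq α q v)*t^(2*q+2*α+6) := by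
      simp only [energy]
      rw [gradSq_scale ht gu, gradSq_scale ht gv, l2sq_scale ht u, l2sq_scale ht v,
          choq_scale ht u, choq_scale ht v, pairInt_scale ht u v]
      ring
    have hR : energy a₁ a₂ b₁ b₂ V₁ V₂ lam μ ν α p q u gu v gv
        = (1/2)*(a₁ * gradSq gu + a₂ * gradSq gv)
          + ((1/2) * (V₁ * l2sq u + V₂ * l2sq v)
            + (1/4) * (b₁ * gradSq gu ^ 2 + b₂ * gradSq gv ^ 2) - lam * pairInt u v)
          - (μ/(2*p) * choq α p u) - (ν/(2*q) * choq α q v) := by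
      simp only [energy]
      ring
    rw [hL, hR]
    exact key_ineq ht hS hcp hcq hgp hgq hJ'


end
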